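/- Let G be the complete k-uniform hypergraph on n ≥ k+1 nodes with adjacency tensor A, and let B = [e₁ ⋯ e_{n−1}]. Then the contraction A e_{j₁} e_{j₂} ⋯ e_{j_{k−1}} for any k−1 distinct indices j₁,…,j_{k−1} ∈ {1,…,n−1} has nonzero n-th coordinate; consequently 𝒞(A,B) = ℝⁿ, so controlling n−1 nodes suffices to control G. -/

import Mathlib

noncomputable section
open Classical

/-- Prepend `j` to the index tuple `js`. -/
def consIdx {n k : ℕ} (j : Fin n) (js : Fin (k - 1) → Fin n) : Fin k → Fin n :=
  fun t => if h : (t : ℕ) = 0 then j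
    else js ⟨(t : ℕ) - 1, by have := t.isLt; omega⟩

/-- Adjacency tensor of a `k`-uniform hypergraph with hyperedge set `E`. -/
def adjT (n k : ℕ) (E : Finset (Finset (Fin n))) : (Fin k → Fin n) → ℝ :=
  fun j => if Function.Injective j ∧ Finset.image j Finset.univ ∈ E
    then ((Nat.factorial (k - 1) : ℝ))⁻¹ else 0

/-- Contraction of a `k`-th order tensor along `k−1` modes with vectors `v`. -/
def tcontract {n k : ℕ} (A : (Fin k → Fin n) → ℝ) (v : Fin (k - 1) → (Fin n → ℝ)) :
    Fin n → ℝ :=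
  fun j => ∑ js : Fin (k - 1) → Fin n, A (consIdx j js) * ∏ i, v i (js i)

/-- The controllability subspace `𝒞(A,B)`: the smallest subspace of `ℝⁿ` containing the
set `Bc` of input columns and closed under the contraction map `v₁,…,v_{k−1} ↦ A v₁ ⋯ v_{k−1}`. -/
def ctrlSpace {n k : ℕ} (A : (Fin k → Fin n) → ℝ) (Bc : Set (Fin n → ℝ)) :
    Submodule ℝ (Fin n → ℝ) :=
  sInf {W : Submodule ℝ (Fin n → ℝ) | Bc ⊆ ↑W ∧
    ∀ v : Fin (k - 1) → (Fin n → ℝ), (∀ i, v i ∈ W) → tcontract A v ∈ W}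

/-- The hyperedge `{l, l+1, …, l+k−1}` of a `k`-uniform hyperchain. -/
def chainEdge (n k l : ℕ) : Finset (Fin n) :=
  Finset.univ.filter (fun i => l ≤ (i : ℕ) ∧ (i : ℕ) < l + k)

/-- The hyperedge set of the `k`-uniform hyperchain on `n` nodes. -/
def chainE (n k : ℕ) : Finset (Finset (Fin n)) :=
  (Finset.range (n - k + 1)).image (chainEdge n k)

/-- Adjacency tensor of the complete `k`-uniform hypergraph on `n` nodes. -/
def completeT (n k : ℕ) : (Fin k → Fin n) → ℝ :=
  fun j => if Function.Injective j then ((Nat.factorial (k - 1) : ℝ))⁻¹ else 0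

/-
The contraction of the complete hypergraph's tensor with `k − 1` distinct basis vectors
`e_j` is `1/(k−1)!` times the indicator of the nodes outside `{j₁, …, j_{k−1}}`: a hyperedge
through node `p` and all the `j`'s exists exactly when `p` is none of them. Taking the `j`'s
among the input nodes `1, …, n−1`, this indicator is `e_n` plus input columns, so `e_n` lies
in `𝒞(A,B)`, which then contains the whole standard basis.
-/

open Finset Function

section consIdx

variable {n k : ℕ} (j : Fin n) (js : Fin (k - 1) → Fin n)

theorem consIdx_zero (hk : 0 < k) : consIdx j js ⟨0, hk⟩ = j := rfl

theorem consIdx_succ (i : Fin (k - 1)) : consIdx j js ⟨i + 1, by omega⟩ = js i := by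
  simp [consIdx]

theorem consIdx_injective_iff : Injective (consIdx j js) ↔ Injective js ∧ j ∉ Set.range js := by
  refine ⟨fun h => ⟨fun a b hab => ?_, fun ⟨i, hi⟩ => ?_⟩, fun ⟨hjs, hj⟩ a b hab => ?_⟩
  · rw [← consIdx_succ j js a, ← consIdx_succ j js b] at hab
    exact Fin.ext (by simpa using h hab)
  · rw [← consIdx_zero j js (by have := i.isLt; omega), ← consIdx_succ j js i] at hi
    exact absurd (h hi) (by simp [Fin.ext_iff])
  · simp only [consIdx] at hab
    split_ifs at hab with ha hb hb
    · exact Fin.ext (by omega)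
    · exact absurd ⟨_, hab.symm⟩ hj
    · exact absurd ⟨_, hab⟩ hj
    · have := congrArg Fin.val (hjs hab)
      exact Fin.ext (by simp only at this; omega)

end consIdx

theorem tcontract_single {n k : ℕ} (A : (Fin k → Fin n) → ℝ) (js : Fin (k - 1) → Fin n)
    (j : Fin n) :
    tcontract A (fun i => (Pi.single (js i) 1 : Fin n → ℝ)) j = A (consIdx j js) := by
  unfold tcontract
  rw [Fintype.sum_eq_single js fun js' hne => ?_]
  · simp
  · obtain ⟨i, hi⟩ := ne_iff.mp hne
    exact mul_eq_zero_of_right _ (Finset.prod_eq_zero (mem_univ i) (Pi.single_eq_of_ne hi 1))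

theorem tcontract_completeT_single {n k : ℕ} {js : Fin (k - 1) → Fin n} (hjs : Injective js) :
    tcontract (completeT n k) (fun i => (Pi.single (js i) 1 : Fin n → ℝ)) =
      ((k - 1).factorial : ℝ)⁻¹ • ∑ p ∈ (univ.image js)ᶜ, (Pi.single p 1 : Fin n → ℝ) := by
  ext p
  simp [tcontract_single, completeT, consIdx_injective_iff, hjs, Finset.sum_pi_single]

section ctrlSpace

variable {n k : ℕ} {A : (Fin k → Fin n) → ℝ} {Bc : Set (Fin n → ℝ)}

theorem subset_ctrlSpace : Bc ⊆ ctrlSpace A Bc :=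
  fun _ hx => Submodule.mem_sInf.mpr fun _ hW => hW.1 hx

theorem tcontract_mem_ctrlSpace {v : Fin (k - 1) → Fin n → ℝ}
    (hv : ∀ i, v i ∈ ctrlSpace A Bc) : tcontract A v ∈ ctrlSpace A Bc :=
  Submodule.mem_sInf.mpr fun W hW =>
    hW.2 v fun i => Submodule.mem_sInf.mp (hv i) W hW

end ctrlSpace

theorem single_mem_ctrlSpace_completeT {n k : ℕ} {Bc : Set (Fin n → ℝ)} {q : Fin n}
    (hB : ∀ p ≠ q, (Pi.single p 1 : Fin n → ℝ) ∈ ctrlSpace (completeT n k) Bc)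
    {js : Fin (k - 1) → Fin n} (hjs : Injective js) (hq : q ∉ Set.range js) :
    (Pi.single q 1 : Fin n → ℝ) ∈ ctrlSpace (completeT n k) Bc := by
  set W := ctrlSpace (completeT n k) Bc
  have hqT : q ∈ (univ.image js)ᶜ := by simpa using hq
  have hsum : ∑ p ∈ (univ.image js)ᶜ, (Pi.single p 1 : Fin n → ℝ) ∈ W := by
    have h : tcontract (completeT n k) (fun i => Pi.single (js i) 1) ∈ W :=
      tcontract_mem_ctrlSpace fun i => hB _ fun h => hq ⟨i, h⟩
    rw [tcontract_completeT_single hjs] at h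
    exact (Submodule.smul_mem_iff _ (by positivity)).mp h
  rw [← Finset.add_sum_erase _ _ hqT] at hsum
  refine (Submodule.add_mem_iff_left W (Submodule.sum_mem W fun p hp => ?_)).mp hsum
  exact hB p (Finset.ne_of_mem_erase hp)

theorem Submodule.eq_top_of_forall_single_mem {R ι : Type*} [Semiring R] [Finite ι]
    [DecidableEq ι] {W : Submodule R (ι → R)} (hW : ∀ i, (Pi.single i 1 : ι → R) ∈ W) :
    W = ⊤ := by
  refine eq_top_iff.mpr ((Pi.basisFun R ι).span_eq.symm.le.trans (Submodule.span_le.mpr ?_))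
  rintro _ ⟨i, rfl⟩
  simpa using hW i

/-- For the complete `k`-uniform hypergraph on `n ≥ k+1` nodes with inputs at nodes
`1,…,n−1`: the contraction of the adjacency tensor with `k−1` distinct standard basis
vectors indexed in `{1,…,n−1}` has nonzero `n`-th coordinate, and `𝒞(A,B) = ℝⁿ`. -/
theorem stmt12 {n k : ℕ} (hkn : k + 1 ≤ n) :
    (∀ js : Fin (k - 1) → Fin n, Function.Injective js → (∀ i, ((js i : ℕ)) < n - 1) →
      tcontract (completeT n k) (fun i => (Pi.single (js i) 1 : Fin n → ℝ))
        ⟨n - 1, by omega⟩ ≠ 0)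
    ∧ ctrlSpace (completeT n k)
        {x | ∃ i : Fin n, (i : ℕ) < n - 1 ∧ x = (Pi.single i 1 : Fin n → ℝ)} = ⊤ := by
  refine ⟨fun js hjs hlt => ?_, Submodule.eq_top_of_forall_single_mem fun q => ?_⟩
  · have hinj : Injective (consIdx ⟨n - 1, by omega⟩ js) :=
      (consIdx_injective_iff _ js).mpr ⟨hjs, fun ⟨i, hi⟩ => by simpa [hi] using hlt i⟩
    simp [tcontract_single, completeT, hinj, Nat.factorial_ne_zero]
  · by_cases hq : (q : ℕ) < n - 1
    · exact subset_ctrlSpace ⟨q, hq, rfl⟩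
    · refine single_mem_ctrlSpace_completeT (fun p hp => subset_ctrlSpace ⟨p, ?_, rfl⟩)
        (Fin.castLE_injective (by omega)) fun ⟨i, hi⟩ => ?_
      · have := Fin.val_ne_of_ne hp; omega
      · have := congrArg Fin.val hi; simp only [Fin.val_castLE] at this; omega
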